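/- Let ζ ∈ ℝ with ζ ≠ 0. Let S be the 4-index array with nonzero entries S^{11}_{22} = ζ, S^{12}_{12} = -1, S^{21}_{21} = -1, S^{22}_{11} = ζ⁻¹, and let g be the matrix with nonzero entries g^{11} = i, g^{22} = -iζ⁻¹. Then: (a) S satisfies the braid equation S₁₂S₂₃S₁₂ = S₂₃S₁₂S₂₃; (b) g annihilates the symmetrized tensor product: Σ_{k,l} (δ^i_k δ^j_l + S^{ij}_{kl}) g^{kl} = 0 for all i,j; (c) the metric-compatibility condition holds: Σ_{m,n,r} S^{im}_{ln} g^{nr} S^{jk}_{mr} = g^{ij} δ^k_l for all i,j,k,l. -/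

import Mathlib

/-!
Writing `W = !![0, ζ; -1, 0]`, the exotic flip is `S = ζ⁻¹ (W ⊗ W) ∘ σ`, a rescaled twist of the
flip `σ` by the tensor square of a single matrix. Any such operator satisfies the braid equation,
since both sides equal `ζ⁻³ (W²)^{⊗3}` composed with the same permutation of tensor factors. For
the metric, contracting `S` against `g` gives `ζ⁻¹ W g Wᵀ`, and the two remaining identities
reduce to `W² = -ζ` and `W g Wᵀ = -ζ g`.
-/

open Finset

/-- The degenerate 'exotic' flip: nonzero entries `S^{11}_{22} = ζ`,
`S^{12}_{12} = -1`, `S^{21}_{21} = -1`, `S^{22}_{11} = ζ⁻¹`, with `ζ` a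
nonzero real parameter. -/
noncomputable def exoticS (ζ : ℝ) : Fin 2 → Fin 2 → Fin 2 → Fin 2 → ℂ :=
  fun i j k l =>
    if i = 0 ∧ j = 0 ∧ k = 1 ∧ l = 1 then (ζ : ℂ)
    else if i = 0 ∧ j = 1 ∧ k = 0 ∧ l = 1 then -1
    else if i = 1 ∧ j = 0 ∧ k = 1 ∧ l = 0 then -1
    else if i = 1 ∧ j = 1 ∧ k = 0 ∧ l = 0 then (ζ : ℂ)⁻¹
    else 0

/-- The 'exotic' metric: nonzero entries `g^{11} = i`, `g^{22} = -iζ⁻¹`. -/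
noncomputable def exoticg (ζ : ℝ) : Fin 2 → Fin 2 → ℂ :=
  fun i j =>
    if i = 0 ∧ j = 0 then Complex.I
    else if i = 1 ∧ j = 1 then -Complex.I * (ζ : ℂ)⁻¹
    else 0

/-- `(S₁₂)^{abc}_{def} = S^{ab}_{de} δ^c_f`, acting on `ℂ² ⊗ ℂ² ⊗ ℂ²`. -/
noncomputable def lift12 (S : Fin 2 → Fin 2 → Fin 2 → Fin 2 → ℂ) :
    Fin 2 → Fin 2 → Fin 2 → Fin 2 → Fin 2 → Fin 2 → ℂ :=
  fun a b c d e f => S a b d e * (if c = f then 1 else 0)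

/-- `(S₂₃)^{abc}_{def} = δ^a_d S^{bc}_{ef}`, acting on `ℂ² ⊗ ℂ² ⊗ ℂ²`. -/
noncomputable def lift23 (S : Fin 2 → Fin 2 → Fin 2 → Fin 2 → ℂ) :
    Fin 2 → Fin 2 → Fin 2 → Fin 2 → Fin 2 → Fin 2 → ℂ :=
  fun a b c d e f => (if a = d then 1 else 0) * S b c e f

/-- Composition of linear maps on `ℂ² ⊗ ℂ² ⊗ ℂ²` given by 6-index arrays:
contraction of the lower index triple of the first against the upper index
triple of the second. -/
noncomputable def comp3
    (A B : Fin 2 → Fin 2 → Fin 2 → Fin 2 → Fin 2 → Fin 2 → ℂ) :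
    Fin 2 → Fin 2 → Fin 2 → Fin 2 → Fin 2 → Fin 2 → ℂ :=
  fun a b c d e f => ∑ x : Fin 2, ∑ y : Fin 2, ∑ z : Fin 2,
    A a b c x y z * B x y z d e f

section
variable (S T : Fin 2 → Fin 2 → Fin 2 → Fin 2 → ℂ)
variable (X : Fin 2 → Fin 2 → Fin 2 → Fin 2 → Fin 2 → Fin 2 → ℂ)

theorem comp3_lift12_apply (a b c d e f : Fin 2) :
    comp3 X (lift12 S) a b c d e f = ∑ x, ∑ y, X a b c x y f * S x y d e := by
  simp [comp3, lift12]

theorem comp3_lift23_apply (a b c d e f : Fin 2) :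
    comp3 X (lift23 S) a b c d e f = ∑ y, ∑ z, X a b c d y z * S y z e f := by
  simp [comp3, lift23]

theorem comp3_lift12_lift23_apply (a b c d e f : Fin 2) :
    comp3 (lift12 S) (lift23 T) a b c d e f = ∑ y, S a b d y * T y c e f := by
  simp [comp3_lift23_apply, lift12]

theorem comp3_lift23_lift12_apply (a b c d e f : Fin 2) :
    comp3 (lift23 S) (lift12 T) a b c d e f = ∑ y, S b c y f * T a y d e := by
  simp [comp3_lift12_apply, lift23]

end

open Matrix

/-- The operator `c (W ⊗ W) ∘ σ`, i.e. `e_k ⊗ e_l ↦ c W e_l ⊗ W e_k`. -/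
def twistFlip {ι R : Type*} [Mul R] (c : R) (W : Matrix ι ι R) : ι → ι → ι → ι → R :=
  fun i j k l => c * W i l * W j k

theorem twistFlip_braid (c : ℂ) (W : Matrix (Fin 2) (Fin 2) ℂ) :
    comp3 (comp3 (lift12 (twistFlip c W)) (lift23 (twistFlip c W))) (lift12 (twistFlip c W))
      = comp3 (comp3 (lift23 (twistFlip c W)) (lift12 (twistFlip c W)))
          (lift23 (twistFlip c W)) := by
  funext a b c d e f
  rw [comp3_lift12_apply, comp3_lift23_apply]
  simp only [comp3_lift12_lift23_apply, comp3_lift23_lift12_apply, twistFlip, Fin.sum_univ_two]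
  ring

section
variable {ι R : Type*} [Fintype ι] [CommRing R]

theorem sum_twistFlip_mul (c : R) (W : Matrix ι ι R) (g : ι → ι → R) (i j : ι) :
    ∑ k, ∑ l, twistFlip c W i j k l * g k l = c * (W * (of g)ᵀ * Wᵀ) i j := by
  simp only [twistFlip, mul_apply, transpose_apply, of_apply, mul_sum, sum_mul]
  exact sum_congr rfl fun _ _ => sum_congr rfl fun _ _ => by ring

theorem sum_twistFlip_mul_twistFlip (c : R) (W : Matrix ι ι R) (g : ι → ι → R) (i j k l : ι) :
    ∑ m, ∑ n, ∑ r, twistFlip c W i m l n * g n r * twistFlip c W j k m r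
      = c ^ 2 * (W * of g * Wᵀ) i j * (W * W) k l := by
  simp only [twistFlip, mul_apply, transpose_apply, of_apply, mul_sum, sum_mul]
  conv_lhs => enter [2, m]; rw [sum_comm]
  exact sum_congr rfl fun _ _ => sum_congr rfl fun _ _ => sum_congr rfl fun _ _ => by ring

end

noncomputable def exoticTwist (ζ : ℝ) : Matrix (Fin 2) (Fin 2) ℂ := !![0, (ζ : ℂ); -1, 0]

theorem exoticS_eq_twistFlip {ζ : ℝ} (hζ : ζ ≠ 0) :
    exoticS ζ = twistFlip (ζ : ℂ)⁻¹ (exoticTwist ζ) := by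
  have hz : (ζ : ℂ) ≠ 0 := Complex.ofReal_ne_zero.mpr hζ
  funext i j k l
  fin_cases i <;> fin_cases j <;> fin_cases k <;> fin_cases l <;>
    simp [exoticS, twistFlip, exoticTwist, hz]

theorem exoticTwist_mul_self (ζ : ℝ) : exoticTwist ζ * exoticTwist ζ = -(ζ : ℂ) • 1 := by
  ext i j
  fin_cases i <;> fin_cases j <;> simp [exoticTwist]

theorem exoticg_isSymm (ζ : ℝ) : (of (exoticg ζ)).IsSymm := by
  ext i j
  fin_cases i <;> fin_cases j <;> simp [exoticg]

theorem exoticTwist_mul_exoticg_mul_transpose {ζ : ℝ} (hζ : ζ ≠ 0) :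
    exoticTwist ζ * of (exoticg ζ) * (exoticTwist ζ)ᵀ = -(ζ : ℂ) • of (exoticg ζ) := by
  have hz : (ζ : ℂ) ≠ 0 := Complex.ofReal_ne_zero.mpr hζ
  ext i j
  simp only [mul_apply, Fin.sum_univ_two, transpose_apply, of_apply, Matrix.smul_apply]
  fin_cases i <;> fin_cases j <;> simp [exoticTwist, exoticg] <;> field_simp

/-- The degenerate 'exotic' solution: (a) `S` satisfies the braid equation;
(b) `g` annihilates the symmetrized tensor product, `g∘(1+σ) = 0`;
(c) metric compatibility holds. -/
theorem exotic_solution (ζ : ℝ) (hζ : ζ ≠ 0) :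
    (comp3 (comp3 (lift12 (exoticS ζ)) (lift23 (exoticS ζ))) (lift12 (exoticS ζ))
      = comp3 (comp3 (lift23 (exoticS ζ)) (lift12 (exoticS ζ))) (lift23 (exoticS ζ)))
    ∧ (∀ i j : Fin 2,
        (∑ k : Fin 2, ∑ l : Fin 2,
            ((if i = k then 1 else 0) * (if j = l then 1 else 0)
                + exoticS ζ i j k l) * exoticg ζ k l)
          = 0)
    ∧ (∀ i j k l : Fin 2,
        (∑ m : Fin 2, ∑ n : Fin 2, ∑ r : Fin 2,
            exoticS ζ i m l n * exoticg ζ n r * exoticS ζ j k m r)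
          = exoticg ζ i j * (if k = l then 1 else 0)) := by
  have hz : (ζ : ℂ) ≠ 0 := Complex.ofReal_ne_zero.mpr hζ
  rw [exoticS_eq_twistFlip hζ]
  refine ⟨twistFlip_braid _ _, fun i j => ?_, fun i j k l => ?_⟩
  · simp only [add_mul, sum_add_distrib, sum_twistFlip_mul, (exoticg_isSymm ζ).eq,
      exoticTwist_mul_exoticg_mul_transpose hζ]
    simp [hz]
  · rw [sum_twistFlip_mul_twistFlip, exoticTwist_mul_exoticg_mul_transpose hζ,
      exoticTwist_mul_self]
    simp only [inv_pow, Matrix.smul_apply, of_apply, smul_eq_mul, neg_mul, mul_neg, one_apply,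
      mul_ite, mul_one, mul_zero, neg_neg]
    field_simp
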